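/- The operators π(σ_{i,i+1}) satisfy the defining relations of the symmetric group: π(σ_{i,i+1})² = id, π(σ_{i,i+1}) π(σ_{i+1,i+2}) π(σ_{i,i+1}) = π(σ_{i+1,i+2}) π(σ_{i,i+1}) π(σ_{i+1,i+2}) for 1 ≤ i ≤ n−2, and π(σ_{i,i+1}) π(σ_{j,j+1}) = π(σ_{j,j+1}) π(σ_{i,i+1}) whenever |i − j| ≥ 2; consequently the assignment σ_{i,i+1} ↦ π(σ_{i,i+1}) extends to an action π of S_n on A(t_1,…,t_n) by K-linear operators, under which π(σ)G(t_1,…,t_n) = ∏_{ℓ<ℓ', σ(ℓ)>σ(ℓ')} ((q⁻¹ − q t_{σ(ℓ')}/t_{σ(ℓ)})/(q − q⁻¹ t_{σ(ℓ')}/t_{σ(ℓ)})) · G(t_{σ(1)},…,t_{σ(n)}). -/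

import Mathlib

noncomputable section

open scoped TensorProduct
open MvPolynomial

/-! ## Rational functions and the q-symmetrization machinery -/

variable (K : Type) [Field K] (ι : Type)

/-- The field `K(t)` of rational functions in the variables `t_i`, `i : ι`. -/
abbrev RatF := FractionRing (MvPolynomial ι K)

/-- The variable `t_i` as a rational function. -/
def tvar (i : ι) : RatF K ι := algebraMap (MvPolynomial ι K) (RatF K ι) (X i)

/-- A scalar `c : K` as a constant rational function. -/
def cst (c : K) : RatF K ι := algebraMap K (RatF K ι) c

/-- Substitution of variables `t_i ↦ t_{f i}` along an injective map `f`, as a `K`-algebra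
endomorphism of the field of rational functions. -/
def renHom (f : ι → ι) (hf : Function.Injective f) : RatF K ι →ₐ[K] RatF K ι :=
  IsFractionRing.liftAlgHom (R := K)
    (g := (IsScalarTower.toAlgHom K (MvPolynomial ι K) (RatF K ι)).comp (rename f))
    ((IsFractionRing.injective _ _).comp (rename_injective f hf))

variable (A : Type) [Ring A] [Algebra K A]

/-- The algebra `A(t) = A ⊗_K K(t)` of `A`-valued rational functions. -/
abbrev AVal := A ⊗[K] RatF K ι

/-- The embedding `K(t) → A(t)`. -/
def inF : RatF K ι →ₐ[K] AVal K ι A := Algebra.TensorProduct.includeRight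

/-- Substitution of variables `t_i ↦ t_{f i}` on `A`-valued rational functions. -/
def renA (f : ι → ι) (hf : Function.Injective f) : AVal K ι A →ₐ[K] AVal K ι A :=
  Algebra.TensorProduct.map (AlgHom.id K A) (renHom K ι f hf)

/-- Extension of a permutation of `Fin k` to a permutation of the whole variable index set `ι`
along an injective enumeration `v : Fin k → ι` of some of the variables. -/
def extPerm {k : ℕ} (v : Fin k → ι) (hv : Function.Injective v) (σ : Equiv.Perm (Fin k)) :
    Equiv.Perm ι :=
  letI := Classical.decPred (· ∈ Set.range v)
  σ.extendDomain (Equiv.ofInjective v hv)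

variable (q : K)

/-- The elementary weight `w(t_i/t_j) = (q⁻¹ − q t_i/t_j)/(q − q⁻¹ t_i/t_j)`. -/
def wfac (i j : ι) : RatF K ι :=
  (cst K ι q⁻¹ - cst K ι q * (tvar K ι i / tvar K ι j)) /
    (cst K ι q - cst K ι q⁻¹ * (tvar K ι i / tvar K ι j))

/-- The weight `∏_{ℓ<ℓ', σ(ℓ)>σ(ℓ')} w(t_{σ(ℓ')}/t_{σ(ℓ)})` of the operator `π(σ)` acting on
functions of the variables `t_{v 0}, …, t_{v (k-1)}`. -/
def qWeight {k : ℕ} (v : Fin k → ι) (σ : Equiv.Perm (Fin k)) : RatF K ι :=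
  ∏ p ∈ Finset.univ.filter (fun p : Fin k × Fin k => p.1 < p.2 ∧ σ p.2 < σ p.1),
    wfac K ι q (v (σ p.2)) (v (σ p.1))

/-- The operator `π(σ)`, `σ ∈ S_k`:
`π(σ)G = ∏_{ℓ<ℓ', σ(ℓ)>σ(ℓ')} w(t_{σ(ℓ')}/t_{σ(ℓ)}) ⬝ G(t_{σ(1)},…,t_{σ(k)})`, acting on `A`-valued
rational functions of the variables `t_{v 0}, …, t_{v (k-1)}`. -/
def piOp {k : ℕ} (v : Fin k → ι) (hv : Function.Injective v) (σ : Equiv.Perm (Fin k)) :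
    AVal K ι A → AVal K ι A := fun G =>
  inF K ι A (qWeight K ι q v σ) * renA K ι A (extPerm ι v hv σ) (Equiv.injective _) G

/-- The operator `π(σ_{i,j})` attached to a transposition:
`π(σ_{i,j})G = w(t_i/t_j) ⬝ (G with t_i, t_j interchanged)`.  For `j = i+1` this is the
operator `π(σ_{i,i+1})` of the paper. -/
def piElem (i j : ι) : AVal K ι A → AVal K ι A := fun G =>
  letI := Classical.decEq ι
  inF K ι A (wfac K ι q i j) * renA K ι A (Equiv.swap i j) (Equiv.injective _) G

/-- The `q`-symmetrization operator `Sym̄ = (1/k!) ∑_{σ ∈ S_k} π(σ)` over the variables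
`t_{v 0}, …, t_{v (k-1)}`. -/
def qSym {k : ℕ} (v : Fin k → ι) (hv : Function.Injective v) :
    AVal K ι A → AVal K ι A := fun G =>
  ((k.factorial : K))⁻¹ • ∑ σ : Equiv.Perm (Fin k), piOp K ι A q v hv σ G

/-!
The weight of `π(σ)` is the product, over the inversions of `σ`, of factors `w(t_a/t_b)` with
`w(t_a/t_b) w(t_b/t_a) = 1`. For any such antisymmetric family the product over inversions is a
1-cocycle for the action of permutations by renaming variables: a pair inverted by exactly one of
`τ` and `σ` (after `τ`) is an inversion of `στ`, and a pair inverted by both appears in the two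
factors of the cocycle with opposite orientations, where the two weights cancel. Hence `σ ↦ π(σ)`
is an action. An adjacent transposition has a single inversion, so it acts by the elementary
operator `π(σ_{i,i+1})`, and the Coxeter relations are inherited from `S_n`.
-/

section InversionWeight

variable {α M : Type*} [LinearOrder α] [Fintype α] [CommMonoid M]

theorem prod_eq_prod_lt_mul_swap (f : α × α → M) (hf : ∀ a, f (a, a) = 1) :
    ∏ p, f p = ∏ p ∈ Finset.univ.filter (fun p : α × α => p.1 < p.2), f p * f p.swap := by
  have hsplit : ∀ p : α × α,
      f p = (if p.1 < p.2 then f p else 1) * (if p.2 < p.1 then f p else 1) := by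
    rintro ⟨a, b⟩
    rcases lt_trichotomy a b with h | rfl | h
    · simp [h, h.not_gt]
    · simp [hf]
    · simp [h, h.not_gt]
  calc ∏ p, f p
      = (∏ p : α × α, if p.1 < p.2 then f p else 1) *
          ∏ p : α × α, if p.2 < p.1 then f p else 1 := by
        rw [← Finset.prod_mul_distrib]; exact Finset.prod_congr rfl fun p _ => hsplit p
    _ = (∏ p : α × α, if p.1 < p.2 then f p else 1) *
          ∏ p : α × α, if p.1 < p.2 then f p.swap else 1 := by
        rw [← Equiv.prod_comp (Equiv.prodComm α α) (fun p => if p.2 < p.1 then f p else 1)]; rfl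
    _ = _ := by
        rw [← Finset.prod_mul_distrib, Finset.prod_filter]
        exact Finset.prod_congr rfl fun p _ => by split_ifs <;> simp

def inversionWeight (u : α → α → M) (σ : Equiv.Perm α) : M :=
  ∏ p ∈ Finset.univ.filter (fun p : α × α => p.1 < p.2 ∧ σ p.2 < σ p.1), u (σ p.2) (σ p.1)

theorem inversionWeight_one (u : α → α → M) : inversionWeight u 1 = 1 := by
  refine Finset.prod_eq_one fun p hp => ?_
  rw [Finset.mem_filter] at hp
  exact absurd hp.2.1 hp.2.2.not_gt

theorem inversionWeight_swap (u : α → α → M) {a b : α} (hab : a ⋖ b) :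
    inversionWeight u (Equiv.swap a b) = u a b := by
  have hinv : Finset.univ.filter (fun p : α × α =>
      p.1 < p.2 ∧ Equiv.swap a b p.2 < Equiv.swap a b p.1) = {(a, b)} := by
    ext ⟨x, y⟩
    simp only [Finset.mem_filter, Finset.mem_univ, true_and, Finset.mem_singleton,
      Prod.mk.injEq]
    rw [Equiv.swap_apply_def, Equiv.swap_apply_def]
    have hlt := hab.lt
    constructor
    · rintro ⟨hxy, hs⟩
      -- any other inversion would put `x` or `y` strictly between `a` and `b`
      split_ifs at hs <;> subst_vars <;>
        first | exact ⟨rfl, rfl⟩ | order |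
          (exfalso; apply hab.2 (c := x) <;> order) | (exfalso; apply hab.2 (c := y) <;> order)
    · rintro ⟨rfl, rfl⟩
      simp [hlt, hlt.ne']
  simp [inversionWeight, hinv]

theorem inversionWeight_mul {u : α → α → M} (hu : ∀ a b, a ≠ b → u a b * u b a = 1)
    (σ τ : Equiv.Perm α) :
    inversionWeight u (σ * τ) =
      inversionWeight u σ * inversionWeight (fun a b => u (σ a) (σ b)) τ := by
  have hσ : inversionWeight u σ = ∏ p : α × α,
      if τ p.1 < τ p.2 ∧ σ (τ p.2) < σ (τ p.1) then u (σ (τ p.2)) (σ (τ p.1)) else 1 := by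
    rw [inversionWeight, Finset.prod_filter]
    exact (Equiv.prod_comp (τ.prodCongr τ) _).symm
  rw [hσ, inversionWeight, inversionWeight, Finset.prod_filter, Finset.prod_filter,
    prod_eq_prod_lt_mul_swap _ (by simp), prod_eq_prod_lt_mul_swap _ (by simp),
    prod_eq_prod_lt_mul_swap _ (by simp), ← Finset.prod_mul_distrib]
  refine Finset.prod_congr rfl fun p hp => ?_
  -- a pair inverted by `τ` and then by `σ` contributes `u x y * u y x = 1`
  obtain ⟨a, b⟩ := p
  simp only [Finset.mem_filter, Finset.mem_univ, true_and] at hp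
  have hτ : τ a ≠ τ b := τ.injective.ne hp.ne
  have hστ : σ (τ a) ≠ σ (τ b) := σ.injective.ne hτ
  rcases hτ.lt_or_gt with h | h <;> rcases hστ.lt_or_gt with h' | h' <;>
    simp [hp, hp.not_gt, h, h.not_gt, h', h'.not_gt, hu _ _ hστ]

end InversionWeight

section

variable {K ι A q}

theorem tvar_ne_zero (i : ι) : tvar K ι i ≠ 0 :=
  (map_ne_zero_iff _ (IsFractionRing.injective _ _)).2 (X_ne_zero i)

theorem tvar_div_tvar_ne_cst {i j : ι} (hij : i ≠ j) (c : K) :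
    tvar K ι i / tvar K ι j ≠ cst K ι c := by
  intro h
  have hpoly : (X i : MvPolynomial ι K) = C c * X j := by
    apply IsFractionRing.injective (MvPolynomial ι K) (RatF K ι)
    rw [div_eq_iff (tvar_ne_zero j)] at h
    simpa [tvar, cst, IsScalarTower.algebraMap_apply K (MvPolynomial ι K) (RatF K ι)] using h
  classical
  simpa [coeff_single_X, hij.symm] using congrArg (coeff (Finsupp.single i 1)) hpoly

theorem cst_sub_cst_mul_tvar_div_tvar_ne_zero (c : K) {d : K} (hd : d ≠ 0) {i j : ι}
    (hij : i ≠ j) : cst K ι c - cst K ι d * (tvar K ι i / tvar K ι j) ≠ 0 := by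
  intro h
  apply tvar_div_tvar_ne_cst hij (c / d)
  have hd' : cst K ι d ≠ 0 := (map_ne_zero _).2 hd
  rw [cst, map_div₀, ← cst, ← cst, eq_div_iff hd', mul_comm]
  exact (sub_eq_zero.1 h).symm

theorem wfac_mul_wfac (hq : q ≠ 0) {i j : ι} (hij : i ≠ j) :
    wfac K ι q i j * wfac K ι q j i = 1 := by
  have hden := cst_sub_cst_mul_tvar_div_tvar_ne_zero q (inv_ne_zero hq) hij
  have hden' := cst_sub_cst_mul_tvar_div_tvar_ne_zero q (inv_ne_zero hq) hij.symm
  have hi := tvar_ne_zero (K := K) i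
  have hj := tvar_ne_zero (K := K) j
  -- after clearing `t_i t_j`, the numerator of either factor is the denominator of the other
  rw [wfac, wfac, div_mul_div_comm, div_eq_one_iff_eq (mul_ne_zero hden hden')]
  field_simp
  ring

theorem renHom_algebraMap (f : ι → ι) (hf : Function.Injective f) (p : MvPolynomial ι K) :
    renHom K ι f hf (algebraMap (MvPolynomial ι K) (RatF K ι) p) =
      algebraMap (MvPolynomial ι K) (RatF K ι) (rename f p) := by
  unfold renHom
  exact IsFractionRing.lift_algebraMap
    (by exact (IsFractionRing.injective _ _).comp (rename_injective f hf)) p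

theorem renHom_tvar (f : ι → ι) (hf : Function.Injective f) (i : ι) :
    renHom K ι f hf (tvar K ι i) = tvar K ι (f i) := by
  rw [tvar, renHom_algebraMap, rename_X, tvar]

theorem renHom_wfac (f : ι → ι) (hf : Function.Injective f) (i j : ι) :
    renHom K ι f hf (wfac K ι q i j) = wfac K ι q (f i) (f j) := by
  simp only [wfac, cst, map_div₀, map_sub, map_mul, AlgHom.commutes, renHom_tvar]

theorem renHom_comp (f g : ι → ι) (hf : Function.Injective f) (hg : Function.Injective g) :
    (renHom K ι f hf).comp (renHom K ι g hg) = renHom K ι (f ∘ g) (hf.comp hg) := by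
  ext i
  change renHom K ι f hf (renHom K ι g hg (tvar K ι i)) =
    renHom K ι (f ∘ g) (hf.comp hg) (tvar K ι i)
  simp only [renHom_tvar, Function.comp_apply]

theorem renHom_id : renHom K ι id Function.injective_id = AlgHom.id K (RatF K ι) := by
  ext i
  exact renHom_tvar id Function.injective_id i

theorem renA_comp (f g : ι → ι) (hf : Function.Injective f) (hg : Function.Injective g) :
    (renA K ι A f hf).comp (renA K ι A g hg) = renA K ι A (f ∘ g) (hf.comp hg) := by
  rw [renA, renA, renA, ← Algebra.TensorProduct.map_id_comp, renHom_comp]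

theorem renA_comp_apply (f g : ι → ι) (hf : Function.Injective f) (hg : Function.Injective g)
    (G : AVal K ι A) :
    renA K ι A f hf (renA K ι A g hg G) = renA K ι A (f ∘ g) (hf.comp hg) G := by
  rw [← renA_comp]
  rfl

theorem renA_id : renA K ι A id Function.injective_id = AlgHom.id K (AVal K ι A) := by
  rw [renA, renHom_id, Algebra.TensorProduct.map_id]

theorem renA_inF (f : ι → ι) (hf : Function.Injective f) (w : RatF K ι) :
    renA K ι A f hf (inF K ι A w) = inF K ι A (renHom K ι f hf w) :=
  Algebra.TensorProduct.map_tmul _ _ _ _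

variable {k : ℕ} {v : Fin k → ι} (hv : Function.Injective v)

theorem extPerm_apply (σ : Equiv.Perm (Fin k)) (a : Fin k) :
    extPerm ι v hv σ (v a) = v (σ a) :=
  letI : DecidablePred (· ∈ Set.range v) := Classical.decPred _
  Equiv.Perm.extendDomain_apply_image σ (Equiv.ofInjective v hv) a

theorem extPerm_one : extPerm ι v hv 1 = 1 :=
  letI : DecidablePred (· ∈ Set.range v) := Classical.decPred _
  Equiv.Perm.extendDomain_one _

theorem extPerm_mul (σ τ : Equiv.Perm (Fin k)) :
    extPerm ι v hv (σ * τ) = extPerm ι v hv σ * extPerm ι v hv τ :=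
  letI : DecidablePred (· ∈ Set.range v) := Classical.decPred _
  (Equiv.Perm.extendDomain_mul _ σ τ).symm

theorem extPerm_swap [DecidableEq ι] (a b : Fin k) :
    extPerm ι v hv (Equiv.swap a b) = Equiv.swap (v a) (v b) := by
  ext x
  by_cases hx : x ∈ Set.range v
  · obtain ⟨c, rfl⟩ := hx
    rw [extPerm_apply, hv.map_swap]
  · have hxa : x ≠ v a := fun h => hx ⟨a, h.symm⟩
    have hxb : x ≠ v b := fun h => hx ⟨b, h.symm⟩
    rw [Equiv.swap_apply_of_ne_of_ne hxa hxb]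
    let : DecidablePred (· ∈ Set.range v) := Classical.decPred _
    exact Equiv.Perm.extendDomain_apply_not_subtype _ _ hx

theorem renHom_qWeight (σ τ : Equiv.Perm (Fin k)) :
    renHom K ι (extPerm ι v hv σ) (Equiv.injective _) (qWeight K ι q v τ) =
      qWeight K ι q (v ∘ σ) τ := by
  simp only [qWeight, map_prod, renHom_wfac, extPerm_apply, Function.comp_apply]

theorem qWeight_eq_inversionWeight (σ : Equiv.Perm (Fin k)) :
    qWeight K ι q v σ = inversionWeight (fun a b => wfac K ι q (v a) (v b)) σ :=
  rfl

theorem qWeight_mul (hv : Function.Injective v) (hq : q ≠ 0) (σ τ : Equiv.Perm (Fin k)) :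
    qWeight K ι q v (σ * τ) = qWeight K ι q v σ * qWeight K ι q (v ∘ σ) τ :=
  inversionWeight_mul (fun _ _ hab => wfac_mul_wfac hq (hv.ne hab)) σ τ

theorem piOp_one (G : AVal K ι A) : piOp K ι A q v hv 1 G = G := by
  simp only [piOp, qWeight_eq_inversionWeight, inversionWeight_one, map_one, one_mul,
    extPerm_one]
  exact DFunLike.congr_fun renA_id G

theorem piOp_mul (hq : q ≠ 0) (σ τ : Equiv.Perm (Fin k)) (G : AVal K ι A) :
    piOp K ι A q v hv (σ * τ) G = piOp K ι A q v hv σ (piOp K ι A q v hv τ G) := by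
  simp only [piOp, map_mul, renA_inF, renHom_qWeight, qWeight_mul hv hq, renA_comp_apply,
    extPerm_mul, mul_assoc]
  rfl

theorem piOp_swap {a b : Fin k} (hab : a ⋖ b) (G : AVal K ι A) :
    piOp K ι A q v hv (Equiv.swap a b) G = piElem K ι A q (v a) (v b) G := by
  classical
  simp only [piOp, piElem, qWeight_eq_inversionWeight, inversionWeight_swap _ hab, extPerm_swap]

end

theorem Equiv.swap_mul_swap_mul_swap_braid {α : Type*} [DecidableEq α] {a b c : α}
    (hab : a ≠ b) (hac : a ≠ c) (hbc : b ≠ c) :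
    swap a b * swap b c * swap a b = swap b c * swap a b * swap b c := by
  rw [swap_mul_swap_mul_swap hab hac, swap_comm a b, swap_comm b c,
    swap_mul_swap_mul_swap hbc.symm hac.symm, swap_comm]

/-- The operators `π(σ_{i,i+1})` satisfy the defining relations of the
symmetric group (involutivity, the braid relations, commutation at distance `≥ 2`);
consequently `σ_{i,i+1} ↦ π(σ_{i,i+1})` extends to an action `π` of `S_n` on `A(t_1,…,t_n)`,
under which `π(σ)` is given by the explicit formula
`π(σ)G = ∏_{ℓ<ℓ', σ(ℓ)>σ(ℓ')} w(t_{σ(ℓ')}/t_{σ(ℓ)}) ⬝ G(t_{σ(1)},…,t_{σ(n)})`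
(the operator `piOp`): the explicit operators agree with the elementary ones on
transpositions and define a group action. -/
theorem piElem_symmetric_group_action
    (K : Type) [Field K] (q : K) (hq : q ≠ 0)
    (A : Type) [Ring A] [Algebra K A] (n : ℕ) :
    (∀ (i : ℕ) (h : i + 1 < n) (G : AVal K (Fin n) A),
        piElem K (Fin n) A q ⟨i, Nat.lt_of_succ_lt h⟩ ⟨i + 1, h⟩
            (piElem K (Fin n) A q ⟨i, Nat.lt_of_succ_lt h⟩ ⟨i + 1, h⟩ G) = G) ∧
    (∀ (i : ℕ) (h : i + 2 < n) (G : AVal K (Fin n) A),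
        piElem K (Fin n) A q ⟨i, by omega⟩ ⟨i + 1, by omega⟩
            (piElem K (Fin n) A q ⟨i + 1, by omega⟩ ⟨i + 2, h⟩
              (piElem K (Fin n) A q ⟨i, by omega⟩ ⟨i + 1, by omega⟩ G)) =
          piElem K (Fin n) A q ⟨i + 1, by omega⟩ ⟨i + 2, h⟩
            (piElem K (Fin n) A q ⟨i, by omega⟩ ⟨i + 1, by omega⟩
              (piElem K (Fin n) A q ⟨i + 1, by omega⟩ ⟨i + 2, h⟩ G))) ∧
    (∀ (i j : ℕ) (hi : i + 1 < n) (hj : j + 1 < n), i + 2 ≤ j ∨ j + 2 ≤ i →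
      ∀ G : AVal K (Fin n) A,
        piElem K (Fin n) A q ⟨i, Nat.lt_of_succ_lt hi⟩ ⟨i + 1, hi⟩
            (piElem K (Fin n) A q ⟨j, Nat.lt_of_succ_lt hj⟩ ⟨j + 1, hj⟩ G) =
          piElem K (Fin n) A q ⟨j, Nat.lt_of_succ_lt hj⟩ ⟨j + 1, hj⟩
            (piElem K (Fin n) A q ⟨i, Nat.lt_of_succ_lt hi⟩ ⟨i + 1, hi⟩ G)) ∧
    (∀ (i : ℕ) (h : i + 1 < n) (G : AVal K (Fin n) A),
        piOp K (Fin n) A q id Function.injective_id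
            (Equiv.swap ⟨i, Nat.lt_of_succ_lt h⟩ ⟨i + 1, h⟩) G =
          piElem K (Fin n) A q ⟨i, Nat.lt_of_succ_lt h⟩ ⟨i + 1, h⟩ G) ∧
    (∀ (σ τ : Equiv.Perm (Fin n)) (G : AVal K (Fin n) A),
        piOp K (Fin n) A q id Function.injective_id (σ * τ) G =
          piOp K (Fin n) A q id Function.injective_id σ
            (piOp K (Fin n) A q id Function.injective_id τ G)) := by
  have hπ : ∀ i (h : i + 1 < n) G, piElem K (Fin n) A q ⟨i, by omega⟩ ⟨i + 1, h⟩ G =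
      piOp K (Fin n) A q id Function.injective_id (.swap ⟨i, by omega⟩ ⟨i + 1, h⟩) G :=
    fun i h G =>
      (piOp_swap Function.injective_id (Fin.covBy_iff.2 (Nat.covBy_iff_add_one_eq.2 rfl)) G).symm
  refine ⟨fun i h G => ?_, fun i h G => ?_, fun i j hi hj hij G => ?_,
    fun i h G => (hπ i h G).symm, piOp_mul _ hq⟩
  · rw [hπ, hπ, ← piOp_mul _ hq, Equiv.swap_mul_self, piOp_one]
  · simp only [hπ, ← piOp_mul _ hq, ← mul_assoc]
    rw [Equiv.swap_mul_swap_mul_swap_braid] <;> simp only [ne_eq, Fin.mk.injEq] <;> omega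
  · simp only [hπ, ← piOp_mul _ hq]
    rw [(Equiv.Perm.disjoint_swap_swap _).commute.eq]
    simp only [List.nodup_cons, List.mem_cons, List.not_mem_nil, List.nodup_nil, or_false,
      not_or, not_false_eq_true, and_true, Fin.ext_iff]
    omega
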